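/- Let F be a totally real field with set of nonzero fractional ideals 𝔉, and fix a set 𝔠 ⊆ 𝔉 of representatives of the narrow ideal class group Cl_F^+(1) = 𝔉/P_+ (P_+ the totally positive principal ideals). Then for each nonzero integral ideal 𝔤, the maps sending the class of a totally positive α ∈ 𝔞 generating 𝔞/𝔤𝔞 over O_F/𝔤 to the ray class of 𝔞^{-1}α induce a bijection ⨆_{𝔞 ∈ 𝔠} Δ\(𝔞/𝔤𝔞)^× → Cl_F^+(𝔤), where Δ is the group of totally positive units and (𝔞/𝔤𝔞)^× denotes the O_F/𝔤-module generators of 𝔞/𝔤𝔞. -/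

import Mathlib

open scoped nonZeroDivisors
open NumberField FractionalIdeal

/-- `x ∈ F` is totally positive: every real embedding sends it to a positive real. -/
def IsTotPos (F : Type*) [Field F] (x : F) : Prop := ∀ τ : F →+* ℝ, 0 < τ x

/-- `x ≡ 1 mod^× 𝔤`. -/
def MulCongOne {F : Type*} [Field F] [NumberField F] (𝔤 : Ideal (𝓞 F)) (x : F) : Prop :=
  ∃ a b : 𝓞 F, (b : F) ≠ 0 ∧ x = (a : F) / (b : F) ∧ a - 1 ∈ 𝔤 ∧ b - 1 ∈ 𝔤

/-- Two fractional ideals lie in the same narrow ray class mod `𝔤`. -/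
def RayEq {F : Type*} [Field F] [NumberField F] (𝔤 : Ideal (𝓞 F))
    (𝔟 𝔟' : FractionalIdeal (𝓞 F)⁰ F) : Prop :=
  ∃ x : F, IsTotPos F x ∧ MulCongOne 𝔤 x ∧ 𝔟' = spanSingleton (𝓞 F)⁰ x * 𝔟

/-- `α` generates `𝔞/𝔤𝔞` as an `𝓞_F/𝔤`-module. -/
def GeneratesModG {F : Type*} [Field F] [NumberField F] (𝔤 : Ideal (𝓞 F))
    (𝔞 : FractionalIdeal (𝓞 F)⁰ F) (α : F) : Prop :=
  α ∈ 𝔞 ∧ ∀ β ∈ 𝔞, ∃ r : 𝓞 F, β - (r : F) * α ∈ (𝔤 : FractionalIdeal (𝓞 F)⁰ F) * 𝔞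

/-!
An element `α ∈ 𝔞` generates `𝔞/𝔤𝔞` exactly when the integral ideal `(α)𝔞⁻¹` is coprime to `𝔤`;
so every integral `𝔟` prime to `𝔤` is `(α)𝔞⁻¹` for `𝔞 ∈ 𝔠` the representative of the narrow
class of `𝔟⁻¹` and `α` a totally positive generator of `𝔟⁻¹𝔞⁻¹`.  Coprimality also supplies
`b ∈ (α)𝔞⁻¹` with `b ≡ 1 mod 𝔤`, and multiplying by `b` turns the additive congruence
`(x - 1)α ∈ 𝔤𝔞` into the multiplicative one `x = bx / b ≡ 1 mod^× 𝔤`: this is well-definedness.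
If `(x)𝔞⁻¹(α) = 𝔞'⁻¹(α')` with `x ≫ 0`, then `𝔞` and `𝔞'` are narrowly equivalent, hence equal,
and `(α') = (xα)` gives `α' = εxα` for a totally positive unit `ε`; when `x ≡ 1 mod^× 𝔤` this
makes `εα ≡ α' mod 𝔤𝔞`.
-/

namespace IsTotPos

variable {F : Type*} [Field F] {x y : F}

theorem ne_zero (hF : Nonempty (F →+* ℝ)) (hx : IsTotPos F x) : x ≠ 0 := by
  obtain ⟨τ⟩ := hF
  rintro rfl
  simpa using hx τ

theorem one : IsTotPos F 1 := fun τ => by simp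

theorem mul (hx : IsTotPos F x) (hy : IsTotPos F y) : IsTotPos F (x * y) := fun τ => by
  rw [map_mul]
  exact mul_pos (hx τ) (hy τ)

theorem inv (hx : IsTotPos F x) : IsTotPos F x⁻¹ := fun τ => by
  rw [map_inv₀]
  exact inv_pos.mpr (hx τ)

theorem div (hx : IsTotPos F x) (hy : IsTotPos F y) : IsTotPos F (x / y) := by
  rw [div_eq_mul_inv]
  exact hx.mul hy.inv

end IsTotPos

theorem Ideal.exists_mem_ne_zero_sub_one_mem {R : Type*} [CommRing R] {I J : Ideal R}
    (hI : I ≠ ⊥) (hIJ : I ⊔ J = ⊤) : ∃ b ∈ I, b ≠ 0 ∧ b - 1 ∈ J := by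
  obtain ⟨b, hb, g, hg, hbg⟩ := Submodule.mem_sup.mp (hIJ ▸ Submodule.mem_top : (1 : R) ∈ I ⊔ J)
  by_cases hb0 : b = 0
  · obtain ⟨c, hc, hc0⟩ := Submodule.exists_mem_ne_zero_of_ne_bot hI
    have hJ : J = ⊤ := (Ideal.eq_top_iff_one J).mpr (by rw [hb0, zero_add] at hbg; exact hbg ▸ hg)
    exact ⟨c, hc, hc0, hJ ▸ Submodule.mem_top⟩
  · refine ⟨b, hb, hb0, ?_⟩
    rw [← hbg, sub_add_cancel_left]
    exact J.neg_mem hg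

section

variable {F : Type*} [Field F] [NumberField F]
  {𝔤 : Ideal (𝓞 F)} {𝔞 : FractionalIdeal (𝓞 F)⁰ F} {α x : F}

theorem generatesModG_iff (h𝔞 : 𝔞 ≠ 0) :
    GeneratesModG 𝔤 𝔞 α ↔ ∃ 𝔟 : Ideal (𝓞 F),
      spanSingleton (𝓞 F)⁰ α = 𝔟 * 𝔞 ∧ 𝔟 ⊔ 𝔤 = ⊤ := by
  constructor
  · rintro ⟨hα, hgen⟩
    have hle : 𝔞 ≤ spanSingleton (𝓞 F)⁰ α + 𝔤 * 𝔞 := fun β hβ => by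
      obtain ⟨r, hr⟩ := hgen β hβ
      exact (mem_add _ _ _).mpr ⟨r * α, (mem_spanSingleton _).mpr ⟨r, Algebra.smul_def r α⟩,
        β - r * α, hr, add_sub_cancel _ _⟩
    obtain ⟨𝔟, h𝔟⟩ : ∃ 𝔟 : Ideal (𝓞 F), 𝔟 = spanSingleton (𝓞 F)⁰ α * 𝔞⁻¹ :=
      le_one_iff_exists_coeIdeal.mp <| by
        simpa [mul_inv_cancel₀ h𝔞] using mul_le_mul_left (spanSingleton_le_iff_mem.mpr hα) 𝔞⁻¹
    have hspan : spanSingleton (𝓞 F)⁰ α = 𝔟 * 𝔞 := by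
      rw [h𝔟, mul_assoc, inv_mul_cancel₀ h𝔞, mul_one]
    refine ⟨𝔟, hspan, top_le_iff.mp <| (coeIdeal_le_coeIdeal F).mp ?_⟩
    calc ((⊤ : Ideal (𝓞 F)) : FractionalIdeal (𝓞 F)⁰ F) = 𝔞 * 𝔞⁻¹ := by
          rw [coeIdeal_top, mul_inv_cancel₀ h𝔞]
      _ ≤ (spanSingleton (𝓞 F)⁰ α + 𝔤 * 𝔞) * 𝔞⁻¹ := mul_le_mul_left hle _
      _ = ↑(𝔟 ⊔ 𝔤) := by
          rw [hspan, coeIdeal_sup, ← add_mul, mul_assoc, mul_inv_cancel₀ h𝔞, mul_one]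
  · rintro ⟨𝔟, hspan, hcop⟩
    have hα : α ∈ 𝔞 := spanSingleton_le_iff_mem.mp (hspan ▸ mul_le_of_le_one_left' coeIdeal_le_one)
    refine ⟨hα, fun β hβ => ?_⟩
    obtain ⟨u, hu, g, hg, hug⟩ :=
      Submodule.mem_sup.mp (hcop ▸ Submodule.mem_top : (1 : 𝓞 F) ∈ 𝔟 ⊔ 𝔤)
    obtain ⟨r, hr⟩ := (mem_spanSingleton _).mp
      (hspan ▸ mul_mem_mul (mem_coeIdeal_of_mem _ hu) hβ : (u : F) * β ∈ spanSingleton _ α)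
    refine ⟨r, ?_⟩
    have hβ' : β - r * α = g * β := by
      have h1 : (u : F) + g = 1 := by exact_mod_cast hug
      rw [← Algebra.smul_def, hr]
      linear_combination -β * h1
    rw [hβ']
    exact mul_mem_mul (mem_coeIdeal_of_mem _ hg) hβ

theorem GeneratesModG.mulCongOne_of_sub_one_mul_mem (hgen : GeneratesModG 𝔤 𝔞 α) (h𝔞 : 𝔞 ≠ 0) (hα : α ≠ 0)
    (hx : (x - 1) * α ∈ (𝔤 : FractionalIdeal (𝓞 F)⁰ F) * 𝔞) : MulCongOne 𝔤 x := by
  obtain ⟨𝔟, hspan, hcop⟩ := (generatesModG_iff h𝔞).mp hgen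
  have h𝔟 : 𝔟 ≠ ⊥ := by
    rintro rfl
    rw [coeIdeal_bot, zero_mul, spanSingleton_eq_zero_iff] at hspan
    exact hα hspan
  obtain ⟨b, hb, hb0, hb1⟩ := Ideal.exists_mem_ne_zero_sub_one_mem h𝔟 hcop
  have hbx : (b : F) * ((x - 1) * α) ∈ spanSingleton (𝓞 F)⁰ α * 𝔤 := by
    rw [hspan, mul_right_comm, mul_assoc]
    exact mul_mem_mul (mem_coeIdeal_of_mem _ hb) hx
  obtain ⟨_, hg𝔤, hgx⟩ := mem_singleton_mul.mp hbx
  obtain ⟨g, hg, rfl⟩ := (mem_coeIdeal _).mp hg𝔤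
  have hg' : (g : F) = b * (x - 1) := mul_left_cancel₀ hα (by rw [← hgx]; ring)
  have hb0' : (b : F) ≠ 0 := by exact_mod_cast hb0
  refine ⟨b + g, b, hb0', ?_, ?_, hb1⟩
  · rw [eq_div_iff hb0']
    push_cast
    linear_combination -hg'
  · rw [add_sub_right_comm]
    exact 𝔤.add_mem hb1 hg

theorem MulCongOne.sub_one_mul_mem (hx : MulCongOne 𝔤 x) {z : F} (hz : z ∈ 𝔞)
    (hxz : (x - 1) * z ∈ 𝔞) : (x - 1) * z ∈ (𝔤 : FractionalIdeal (𝓞 F)⁰ F) * 𝔞 := by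
  obtain ⟨a, b, hb0, rfl, ha, hb⟩ := hx
  have hsplit : (a / b - 1) * z = ((a - 1 - (b - 1) : 𝓞 F) : F) * z
      - ((b - 1 : 𝓞 F) : F) * ((a / b - 1) * z) := by
    push_cast
    field_simp
    ring
  rw [hsplit]
  exact Submodule.sub_mem _ (mul_mem_mul (mem_coeIdeal_of_mem _ (𝔤.sub_mem ha hb)) hz)
    (mul_mem_mul (mem_coeIdeal_of_mem _ hb) hxz)

theorem RayEq.refl (𝔟 : FractionalIdeal (𝓞 F)⁰ F) : RayEq 𝔤 𝔟 𝔟 :=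
  ⟨1, IsTotPos.one, ⟨1, 1, one_ne_zero, by simp, by simp, by simp⟩, by
    rw [spanSingleton_one, one_mul]⟩

def IsNarrowClassReps (𝔠 : Set (FractionalIdeal (𝓞 F)⁰ F)) : Prop :=
  ∀ 𝔟 : FractionalIdeal (𝓞 F)⁰ F, 𝔟 ≠ 0 →
    ∃! 𝔞, 𝔞 ∈ 𝔠 ∧ ∃ x : F, IsTotPos F x ∧ 𝔟 = spanSingleton (𝓞 F)⁰ x * 𝔞

theorem rayEq_of_unit_mul_sub_mem (hF : Nonempty (F →+* ℝ)) (h𝔞 : 𝔞 ≠ 0) {α' : F}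
    (hα : IsTotPos F α) (hα' : IsTotPos F α') (hgen : GeneratesModG 𝔤 𝔞 α) {ε : (𝓞 F)ˣ}
    (hε : IsTotPos F ((ε : 𝓞 F) : F))
    (hεα : ((ε : 𝓞 F) : F) * α - α' ∈ (𝔤 : FractionalIdeal (𝓞 F)⁰ F) * 𝔞) :
    RayEq 𝔤 (𝔞⁻¹ * spanSingleton (𝓞 F)⁰ α) (𝔞⁻¹ * spanSingleton (𝓞 F)⁰ α') := by
  have hα0 := hα.ne_zero hF
  have hε0 := hε.ne_zero hF
  refine ⟨α' / (ε * α), hα'.div (hε.mul hα), hgen.mulCongOne_of_sub_one_mul_mem h𝔞 hα0 ?_, ?_⟩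
  · have h : (α' / (ε * α) - 1) * α = (((ε⁻¹ : (𝓞 F)ˣ) : 𝓞 F) : F) * -(ε * α - α') := by
      simp only [map_units_inv, neg_sub]
      field_simp
    rw [h]
    exact Submodule.smul_mem _ _ (Submodule.neg_mem _ hεα)
  · rw [mul_left_comm, spanSingleton_mul_spanSingleton]
    congr 1
    refine spanSingleton_eq_spanSingleton.mpr ⟨ε⁻¹, ?_⟩
    simp only [Units.smul_def, Algebra.smul_def, map_units_inv, ← RingOfIntegers.coe_eq_algebraMap]
    field_simp

theorem exists_generatesModG_rayEq {𝔠 : Set (FractionalIdeal (𝓞 F)⁰ F)}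
    (h𝔠 : IsNarrowClassReps 𝔠) {𝔟 : Ideal (𝓞 F)} (h𝔟 : 𝔟 ≠ ⊥) (hcop : IsCoprime 𝔟 𝔤) :
    ∃ 𝔞 ∈ 𝔠, ∃ α : F, IsTotPos F α ∧ GeneratesModG 𝔤 𝔞 α ∧
      RayEq 𝔤 (𝔞⁻¹ * spanSingleton (𝓞 F)⁰ α) (𝔟 : FractionalIdeal (𝓞 F)⁰ F) := by
  have h𝔟0 : (𝔟 : FractionalIdeal (𝓞 F)⁰ F) ≠ 0 := coeIdeal_ne_zero.mpr h𝔟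
  obtain ⟨𝔞, ⟨h𝔞, x, hx, hinv⟩, -⟩ := h𝔠 _ (inv_ne_zero h𝔟0)
  have h𝔞0 : 𝔞 ≠ 0 := right_ne_zero_of_mul (hinv ▸ inv_ne_zero h𝔟0)
  have h𝔟x : (𝔟 : FractionalIdeal (𝓞 F)⁰ F) = 𝔞⁻¹ * spanSingleton (𝓞 F)⁰ x⁻¹ := by
    rw [← spanSingleton_inv, ← mul_inv, mul_comm, ← hinv, inv_inv]
  refine ⟨𝔞, h𝔞, x⁻¹, hx.inv,
    (generatesModG_iff h𝔞0).mpr ⟨𝔟, ?_, Ideal.isCoprime_iff_sup_eq.mp hcop⟩, h𝔟x ▸ RayEq.refl _⟩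
  rw [h𝔟x, mul_right_comm, inv_mul_cancel₀ h𝔞0, one_mul]

theorem eq_and_exists_unit_of_rayEq (hF : Nonempty (F →+* ℝ))
    {𝔠 : Set (FractionalIdeal (𝓞 F)⁰ F)} (h𝔠 : IsNarrowClassReps 𝔠)
    {𝔞' : FractionalIdeal (𝓞 F)⁰ F} (h𝔞 : 𝔞 ∈ 𝔠) (h𝔞' : 𝔞' ∈ 𝔠) (h𝔞0 : 𝔞 ≠ 0) (h𝔞'0 : 𝔞' ≠ 0)
    {α' : F} (hα : IsTotPos F α) (hα' : IsTotPos F α') (hα𝔞 : α ∈ 𝔞) (hα'𝔞 : α' ∈ 𝔞')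
    (h : RayEq 𝔤 (𝔞⁻¹ * spanSingleton (𝓞 F)⁰ α) (𝔞'⁻¹ * spanSingleton (𝓞 F)⁰ α')) :
    𝔞 = 𝔞' ∧ ∃ ε : (𝓞 F)ˣ, IsTotPos F ((ε : 𝓞 F) : F) ∧
      ((ε : 𝓞 F) : F) * α - α' ∈ (𝔤 : FractionalIdeal (𝓞 F)⁰ F) * 𝔞 := by
  obtain ⟨x, hx, hxg, heq⟩ := h
  have hα0 := hα.ne_zero hF
  have hx0 := hx.ne_zero hF
  have h𝔞𝔞' : 𝔞' = spanSingleton (𝓞 F)⁰ (α' / (x * α)) * 𝔞 := by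
    rw [div_eq_mul_inv, ← spanSingleton_mul_spanSingleton, ← spanSingleton_inv,
      ← spanSingleton_mul_spanSingleton]
    have hsx : spanSingleton (𝓞 F)⁰ x ≠ 0 := spanSingleton_ne_zero_iff.mpr hx0
    have hsα : spanSingleton (𝓞 F)⁰ α ≠ 0 := spanSingleton_ne_zero_iff.mpr hα0
    field_simp at heq ⊢
    rw [heq]
  obtain rfl : 𝔞 = 𝔞' := (h𝔠 𝔞' h𝔞'0).unique ⟨h𝔞, _, hα'.div (hx.mul hα), h𝔞𝔞'⟩
    ⟨h𝔞', 1, IsTotPos.one, by rw [spanSingleton_one, one_mul]⟩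
  have hspan : spanSingleton (𝓞 F)⁰ (x * α) = spanSingleton (𝓞 F)⁰ α' := by
    rw [← spanSingleton_mul_spanSingleton]
    field_simp at heq
    exact heq.symm
  obtain ⟨u, hu⟩ := spanSingleton_eq_spanSingleton.mp hspan
  rw [Units.smul_def, Algebra.smul_def, ← RingOfIntegers.coe_eq_algebraMap] at hu
  have hu' : ((u : 𝓞 F) : F) = α' / (x * α) := by
    rw [← hu]
    field_simp
  have hxu : (x - 1) * (u * α) = α' - u * α := by
    rw [← hu]
    ring
  have hu𝔞 : ((u : 𝓞 F) : F) * α ∈ 𝔞 := Submodule.smul_mem _ _ hα𝔞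
  refine ⟨rfl, u, hu' ▸ hα'.div (hx.mul hα), ?_⟩
  have := hxg.sub_one_mul_mem hu𝔞 (hxu ▸ Submodule.sub_mem _ hα'𝔞 hu𝔞)
  rw [hxu] at this
  rw [← neg_sub]
  exact Submodule.neg_mem _ this

end

theorem ray_class_group_decomposition_general
    (F : Type*) [Field F] [NumberField F]
    (htr : ∀ v : NumberField.InfinitePlace F, v.IsReal)
    (𝔤 : Ideal (𝓞 F))
    (𝔠 : Set (FractionalIdeal (𝓞 F)⁰ F))
    (h𝔠0 : ∀ 𝔞 ∈ 𝔠, 𝔞 ≠ 0)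
    (h𝔠 : ∀ 𝔟 : FractionalIdeal (𝓞 F)⁰ F, 𝔟 ≠ 0 →
      ∃! 𝔞, 𝔞 ∈ 𝔠 ∧ ∃ x : F, IsTotPos F x ∧ 𝔟 = spanSingleton (𝓞 F)⁰ x * 𝔞) :
    -- well-definedness on `Δ\(𝔞/𝔤𝔞)^×`
    (∀ 𝔞 ∈ 𝔠, ∀ α α' : F, IsTotPos F α → IsTotPos F α' →
      GeneratesModG 𝔤 𝔞 α → GeneratesModG 𝔤 𝔞 α' →
      (∃ ε : (𝓞 F)ˣ, IsTotPos F ((ε : 𝓞 F) : F) ∧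
        ((ε : 𝓞 F) : F) * α - α' ∈ (𝔤 : FractionalIdeal (𝓞 F)⁰ F) * 𝔞) →
      RayEq 𝔤 (𝔞⁻¹ * spanSingleton (𝓞 F)⁰ α) (𝔞⁻¹ * spanSingleton (𝓞 F)⁰ α')) ∧
    -- surjectivity onto `Cl_F^+(𝔤)` (whose classes are represented by integral ideals
    -- prime to `𝔤`)
    (∀ 𝔟 : Ideal (𝓞 F), 𝔟 ≠ ⊥ → IsCoprime 𝔟 𝔤 →
      ∃ 𝔞 ∈ 𝔠, ∃ α : F, IsTotPos F α ∧ GeneratesModG 𝔤 𝔞 α ∧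
        RayEq 𝔤 (𝔞⁻¹ * spanSingleton (𝓞 F)⁰ α) (𝔟 : FractionalIdeal (𝓞 F)⁰ F)) ∧
    -- injectivity
    (∀ 𝔞 ∈ 𝔠, ∀ 𝔞' ∈ 𝔠, ∀ α α' : F, IsTotPos F α → IsTotPos F α' →
      GeneratesModG 𝔤 𝔞 α → GeneratesModG 𝔤 𝔞' α' →
      RayEq 𝔤 (𝔞⁻¹ * spanSingleton (𝓞 F)⁰ α) (𝔞'⁻¹ * spanSingleton (𝓞 F)⁰ α') →
      𝔞 = 𝔞' ∧ ∃ ε : (𝓞 F)ˣ, IsTotPos F ((ε : 𝓞 F) : F) ∧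
        ((ε : 𝓞 F) : F) * α - α' ∈ (𝔤 : FractionalIdeal (𝓞 F)⁰ F) * 𝔞) := by
  have hF : Nonempty (F →+* ℝ) :=
    ⟨InfinitePlace.embedding_of_isReal (htr (Classical.arbitrary _))⟩
  refine ⟨?_, fun 𝔟 h𝔟 hcop => exists_generatesModG_rayEq h𝔠 h𝔟 hcop, ?_⟩
  · rintro 𝔞 h𝔞 α α' hα hα' hgen - ⟨ε, hε, hεα⟩
    exact rayEq_of_unit_mul_sub_mem hF (h𝔠0 𝔞 h𝔞) hα hα' hgen hε hεα
  · intro 𝔞 h𝔞 𝔞' h𝔞' α α' hα hα' hgen hgen' h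
    exact eq_and_exists_unit_of_rayEq hF h𝔠 h𝔞 h𝔞' (h𝔠0 𝔞 h𝔞) (h𝔠0 𝔞' h𝔞') hα hα' hgen.1
      hgen'.1 h

/-- **Decomposition of the narrow ray class group.** Let `F` be totally real, `𝔠` a set
of representatives of the narrow ideal class group `Cl_F^+(1)` and `𝔤 ≠ 0` an integral
ideal.  The maps sending (the class of) a totally positive generator `α` of `𝔞/𝔤𝔞`
(`𝔞 ∈ 𝔠`) to the ray class of `𝔞⁻¹α` are well defined and induce a bijection
`⨆_{𝔞 ∈ 𝔠} Δ\(𝔞/𝔤𝔞)^× → Cl_F^+(𝔤)`: here this is expressed by well-definedness,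
surjectivity, and injectivity of the induced map. -/
theorem ray_class_group_decomposition
    (F : Type*) [Field F] [NumberField F]
    (htr : ∀ v : NumberField.InfinitePlace F, v.IsReal)
    (𝔤 : Ideal (𝓞 F)) (h𝔤 : 𝔤 ≠ ⊥)
    (𝔠 : Set (FractionalIdeal (𝓞 F)⁰ F))
    (h𝔠0 : ∀ 𝔞 ∈ 𝔠, 𝔞 ≠ 0)
    (h𝔠 : ∀ 𝔟 : FractionalIdeal (𝓞 F)⁰ F, 𝔟 ≠ 0 →
      ∃! 𝔞, 𝔞 ∈ 𝔠 ∧ ∃ x : F, IsTotPos F x ∧ 𝔟 = spanSingleton (𝓞 F)⁰ x * 𝔞) :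
    -- well-definedness on `Δ\(𝔞/𝔤𝔞)^×`
    (∀ 𝔞 ∈ 𝔠, ∀ α α' : F, IsTotPos F α → IsTotPos F α' →
      GeneratesModG 𝔤 𝔞 α → GeneratesModG 𝔤 𝔞 α' →
      (∃ ε : (𝓞 F)ˣ, IsTotPos F ((ε : 𝓞 F) : F) ∧
        ((ε : 𝓞 F) : F) * α - α' ∈ (𝔤 : FractionalIdeal (𝓞 F)⁰ F) * 𝔞) →
      RayEq 𝔤 (𝔞⁻¹ * spanSingleton (𝓞 F)⁰ α) (𝔞⁻¹ * spanSingleton (𝓞 F)⁰ α')) ∧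
    -- surjectivity onto `Cl_F^+(𝔤)` (whose classes are represented by integral ideals
    -- prime to `𝔤`)
    (∀ 𝔟 : Ideal (𝓞 F), 𝔟 ≠ ⊥ → IsCoprime 𝔟 𝔤 →
      ∃ 𝔞 ∈ 𝔠, ∃ α : F, IsTotPos F α ∧ GeneratesModG 𝔤 𝔞 α ∧
        RayEq 𝔤 (𝔞⁻¹ * spanSingleton (𝓞 F)⁰ α) (𝔟 : FractionalIdeal (𝓞 F)⁰ F)) ∧
    -- injectivity
    (∀ 𝔞 ∈ 𝔠, ∀ 𝔞' ∈ 𝔠, ∀ α α' : F, IsTotPos F α → IsTotPos F α' →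
      GeneratesModG 𝔤 𝔞 α → GeneratesModG 𝔤 𝔞' α' →
      RayEq 𝔤 (𝔞⁻¹ * spanSingleton (𝓞 F)⁰ α) (𝔞'⁻¹ * spanSingleton (𝓞 F)⁰ α') →
      𝔞 = 𝔞' ∧ ∃ ε : (𝓞 F)ˣ, IsTotPos F ((ε : 𝓞 F) : F) ∧
        ((ε : 𝓞 F) : F) * α - α' ∈ (𝔤 : FractionalIdeal (𝓞 F)⁰ F) * 𝔞) :=
  ray_class_group_decomposition_general F htr 𝔤 𝔠 h𝔠0 h𝔠
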